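/- Let p ∈ (0, 3). Then the integral ∬_{B_1 × S^1} ((x·u)² + 1 − |x|²)^{−p/2} dx du over the unit disk B_1 ⊂ R^2 and the unit circle S^1 is finite. Equivalently, the reciprocal chord-length function 1/L(x,u) with L = 2√((x·u)² + 1 − |x|²) is in L^p(B_1 × S^1) for all p < 3. -/

import Mathlib

/-!
A reflection taking `u` to a coordinate vector shows that the inner integral over the disc does
not depend on `u`. For `u = e₁` the integrand is `(1 - x₀²)^(-p/2)`, and integrating out `x₁`
over a chord of length `2√(1 - x₀²)` leaves `∫_{-1}^{1} 2 (1 - a²)^((1 - p)/2) da`, which is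
finite exactly when `p < 3`.
-/

open MeasureTheory Metric Set ENNReal

theorem setLIntegral_ball_comp_inner_eq {E : Type*} [NormedAddCommGroup E] [InnerProductSpace ℝ E]
    [FiniteDimensional ℝ E] [MeasurableSpace E] [BorelSpace E] {u v : E} (h : ‖u‖ = ‖v‖)
    (g : ℝ → ℝ → ℝ≥0∞) (r : ℝ) :
    ∫⁻ x in ball 0 r, g (inner ℝ x u) ‖x‖ = ∫⁻ x in ball 0 r, g (inner ℝ x v) ‖x‖ := by
  set R := (ℝ ∙ (u - v))ᗮ.reflection
  have hRu : R u = v := Submodule.reflection_sub h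
  conv_rhs => rw [← R.measurePreserving.setLIntegral_comp_preimage_emb
    R.toHomeomorph.measurableEmbedding, ← hRu]
  simp

theorem lintegral_ball_fin_two_comp_coord {r : ℝ} (hr : 0 ≤ r) {f : ℝ → ℝ≥0∞}
    (hf : Measurable f) :
    ∫⁻ x in ball (0 : EuclideanSpace ℝ (Fin 2)) r, f (x 0) =
      ∫⁻ a, f a * ENNReal.ofReal (2 * √(r ^ 2 - a ^ 2)) := by
  let ψ : ℝ × ℝ ≃ᵐ EuclideanSpace ℝ (Fin 2) :=
    MeasurableEquiv.finTwoArrow.symm.trans (MeasurableEquiv.toLp 2 (Fin 2 → ℝ))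
  have hψ : MeasurePreserving ψ volume volume :=
    (EuclideanSpace.volume_preserving_symm_measurableEquiv_toLp (Fin 2)).symm.comp
      (volume_preserving_finTwoArrow ℝ).symm
  set S := {z : ℝ × ℝ | z.1 ^ 2 + z.2 ^ 2 < r ^ 2}
  have hpre : ψ ⁻¹' ball 0 r = S := by
    ext z
    have : ‖ψ z‖ ^ 2 = z.1 ^ 2 + z.2 ^ 2 := by
      simp [ψ, EuclideanSpace.real_norm_sq_eq, Fin.sum_univ_two]
    simp [S, ← this, sq_lt_sq₀ (norm_nonneg _) hr]
  have hS : MeasurableSet S := measurableSet_lt (by fun_prop) measurable_const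
  have hslice (a : ℝ) : Prod.mk a ⁻¹' S = ball 0 √(r ^ 2 - a ^ 2) := by
    ext b
    rw [mem_ball_zero_iff, Real.norm_eq_abs, Real.lt_sqrt (abs_nonneg b), sq_abs,
      lt_sub_iff_add_lt', mem_preimage, mem_ofPred_eq]
  calc ∫⁻ x in ball (0 : EuclideanSpace ℝ (Fin 2)) r, f (x 0)
      = ∫⁻ z, S.indicator (f ∘ Prod.fst) z ∂(volume.prod volume) := by
        rw [← hψ.setLIntegral_comp_preimage_emb ψ.measurableEmbedding, hpre,
          lintegral_indicator hS, Measure.volume_eq_prod]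
        rfl
    _ = ∫⁻ a, f a * ENNReal.ofReal (2 * √(r ^ 2 - a ^ 2)) := by
        rw [lintegral_prod _ ((hf.comp measurable_fst).indicator hS).aemeasurable]
        refine lintegral_congr fun a => ?_
        rw [← Real.volume_ball, ← lintegral_indicator_const measurableSet_ball, ← hslice]
        rfl

theorem one_sub_sq_rpow_le {α b : ℝ} (hb : b ∈ Ioo (-1 : ℝ) 1) :
    (1 - b ^ 2) ^ α ≤ 1 + (1 + b) ^ α + (1 - b) ^ α := by
  obtain ⟨hb₁, hb₂⟩ := hb
  have hadd : 0 ≤ (1 + b) ^ α := Real.rpow_nonneg (by linarith) α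
  have hsub : 0 ≤ (1 - b) ^ α := Real.rpow_nonneg (by linarith) α
  rcases le_or_gt 0 α with hα | hα
  · have : (1 - b ^ 2) ^ α ≤ 1 := Real.rpow_le_one (by nlinarith) (by nlinarith) hα
    linarith
  rw [show 1 - b ^ 2 = (1 + b) * (1 - b) by ring, Real.mul_rpow (by linarith) (by linarith)]
  rcases le_or_gt 0 b with hb | hb
  · have : (1 + b) ^ α ≤ 1 := Real.rpow_le_one_of_one_le_of_nonpos (by linarith) hα.le
    nlinarith
  · have : (1 - b) ^ α ≤ 1 := Real.rpow_le_one_of_one_le_of_nonpos (by linarith) hα.le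
    nlinarith

theorem integrableOn_one_sub_sq_rpow {α : ℝ} (hα : -1 < α) :
    IntegrableOn (fun b : ℝ => (1 - b ^ 2) ^ α) (Ioo (-1) 1) := by
  have hpow : IntervalIntegrable (fun x : ℝ => x ^ α) volume 0 2 :=
    intervalIntegral.intervalIntegrable_rpow' hα
  have hadd : IntervalIntegrable (fun b : ℝ => (1 + b) ^ α) volume (-1) 1 := by
    have := hpow.comp_add_left 1
    norm_num at this
    exact this
  have hsub : IntervalIntegrable (fun b : ℝ => (1 - b) ^ α) volume (-1) 1 := by
    have := (hpow.comp_sub_left 1).symm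
    norm_num at this
    exact this
  have hdom : IntegrableOn (fun b : ℝ => 1 + (1 + b) ^ α + (1 - b) ^ α) (Ioo (-1) 1) :=
    ((intervalIntegrable_const.add hadd).add hsub).1.mono_set Ioo_subset_Ioc_self
  have hmeas : Measurable fun b : ℝ => (1 - b ^ 2) ^ α := by fun_prop
  refine hdom.mono' hmeas.aestronglyMeasurable
    (ae_restrict_of_forall_mem measurableSet_Ioo fun b hb => ?_)
  rw [Real.norm_of_nonneg (Real.rpow_nonneg (by nlinarith [hb.1, hb.2]) α)]
  exact one_sub_sq_rpow_le hb

theorem setLIntegral_ball_one_sub_sq_rpow_lt_top {c : ℝ} (hc : -(3 / 2) < c) :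
    ∫⁻ x in ball (0 : EuclideanSpace ℝ (Fin 2)) 1, ‖(1 - x 0 ^ 2) ^ c‖ₑ < ⊤ := by
  rw [lintegral_ball_fin_two_comp_coord zero_le_one (f := fun a => ‖(1 - a ^ 2) ^ c‖ₑ)
    (by fun_prop)]
  have hsupp : (fun a : ℝ => ‖(1 - a ^ 2) ^ c‖ₑ * ENNReal.ofReal (2 * √(1 ^ 2 - a ^ 2))).support
      ⊆ Ioo (-1) 1 := by
    refine Function.support_subset_iff'.2 fun a ha => ?_
    have hneg : 1 - a ^ 2 ≤ 0 := by
      rw [mem_Ioo, not_and_or, not_lt, not_lt] at ha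
      rcases ha with h | h <;> nlinarith
    simp [Real.sqrt_eq_zero'.2 hneg]
  rw [← setLIntegral_eq_of_support_subset hsupp]
  calc _ = ∫⁻ a in Ioo (-1 : ℝ) 1, ‖2 * (1 - a ^ 2) ^ (c + 1 / 2)‖ₑ := by
        refine setLIntegral_congr_fun measurableSet_Ioo fun a ha => ?_
        have hpos : 0 < 1 - a ^ 2 := by nlinarith [ha.1, ha.2]
        rw [← Real.enorm_of_nonneg (by positivity), ← enorm_mul, one_pow, Real.sqrt_eq_rpow,
          mul_comm, mul_assoc, ← Real.rpow_add hpos, add_comm]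
    _ < ⊤ := ((integrableOn_one_sub_sq_rpow (by linarith)).const_mul 2).2

theorem inv_chord_length_integrable_general (p : ℝ) (hp3 : p < 3) :
    Integrable
      (fun q : EuclideanSpace ℝ (Fin 2) × sphere (0 : EuclideanSpace ℝ (Fin 2)) 1 =>
        ((inner ℝ q.1 (q.2 : EuclideanSpace ℝ (Fin 2)) : ℝ) ^ 2 + 1 - ‖q.1‖ ^ 2) ^ (-(p / 2)))
      ((volume.restrict (ball (0 : EuclideanSpace ℝ (Fin 2)) 1)).prod
        (volume : Measure (EuclideanSpace ℝ (Fin 2))).toSphere) := by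
  refine ⟨Measurable.aestronglyMeasurable (by fun_prop), ?_⟩
  rw [HasFiniteIntegral, lintegral_prod_symm _ (by fun_prop)]
  have hrot (u : sphere (0 : EuclideanSpace ℝ (Fin 2)) 1) :
      ∫⁻ x in ball (0 : EuclideanSpace ℝ (Fin 2)) 1,
          ‖(inner ℝ x (u : EuclideanSpace ℝ (Fin 2)) ^ 2 + 1 - ‖x‖ ^ 2) ^ (-(p / 2))‖ₑ
        = ∫⁻ x in ball (0 : EuclideanSpace ℝ (Fin 2)) 1, ‖(1 - x 0 ^ 2) ^ (-(p / 2))‖ₑ := by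
    have hu : ‖(u : EuclideanSpace ℝ (Fin 2))‖ = ‖EuclideanSpace.single (1 : Fin 2) (1 : ℝ)‖ := by
      simp [norm_eq_of_mem_sphere u]
    refine (setLIntegral_ball_comp_inner_eq hu
      (fun a t => ‖(a ^ 2 + 1 - t ^ 2) ^ (-(p / 2))‖ₑ) 1).trans (lintegral_congr fun x => ?_)
    simp only [EuclideanSpace.inner_single_right, one_mul, conj_trivial,
      EuclideanSpace.real_norm_sq_eq, Fin.sum_univ_two]
    congr 2
    ring
  simp_rw [hrot, lintegral_const]
  exact mul_lt_top (setLIntegral_ball_one_sub_sq_rpow_lt_top (by linarith)) (measure_lt_top _ _)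

/-- The reciprocal chord-length function `1/L`, with `L = 2√((x·u)² + 1 - |x|²)`, is in
`L^p(B₁ × S¹)` for every `p < 3`: the integral
`∬_{B₁×S¹} ((x·u)² + 1 - |x|²)^{-p/2} dx du` is finite. The unit circle carries its
arclength measure (the surface measure `volume.toSphere`). -/
theorem inv_chord_length_integrable (p : ℝ) (hp0 : 0 < p) (hp3 : p < 3) :
    Integrable
      (fun q : EuclideanSpace ℝ (Fin 2) × sphere (0 : EuclideanSpace ℝ (Fin 2)) 1 =>
        ((inner ℝ q.1 (q.2 : EuclideanSpace ℝ (Fin 2)) : ℝ) ^ 2 + 1 - ‖q.1‖ ^ 2) ^ (-(p / 2)))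
      ((volume.restrict (ball (0 : EuclideanSpace ℝ (Fin 2)) 1)).prod
        (volume : Measure (EuclideanSpace ℝ (Fin 2))).toSphere) :=
  inv_chord_length_integrable_general p hp3
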